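/- Let Γ be a countable abelian group and α : Γ → Γ an injective group endomorphism. Let S be a pure isometry on a separable Hilbert space K (i.e., ⋂_{k≥1} S^k(K) = {0}), let (K_∞, {U_n}) be the direct limit of the system K →S→ K →S→ ···, let S_∞ be the unitary on K_∞ determined by S_∞(U_{n+1} h) = U_n h, and suppose ρ is a unitary representation of Γ on K with S ρ_γ = ρ_{α(γ)} S for all γ ∈ Γ. Let π be the unitary representation of Γ on K_∞ with π_γ ∘ U_n = U_n ∘ ρ_{α^n(γ)}, and set δ := S_∞^{-1}. Then the subspaces V_n := U_n(K) for n ≥ 0 and V_n := S_∞^{|n|}(V_0) for n < 0 form a generalized multiresolution analysis relative to π and δ: (a) V_n ⊆ V_{n+1} for all n ∈ ℤ; (b) V_{n+1} = δ(V_n) for all n ∈ ℤ; (c) ⋃_{n≥0} V_n is dense in K_∞ and ⋂_{n≤0} V_n = {0}; (d) V_0 is invariant under π. -/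

import Mathlib

/-!
Writing `δ = S∞⁻¹`, the relation `S∞ ∘ U (n+1) = U n` gives `V n = δ ^ n (V 0)` for every
`n : ℤ`, so (b) holds by construction and (a) reduces to `S∞ (V 0) ⊆ V 0`, which follows from
`S∞ ∘ U 0 = U 0 ∘ S`. The same intertwining shows `⋂ₖ S∞ᵏ (V 0) = U 0 (⋂ₖ Sᵏ K)`, which vanishes
because `S` is pure.
-/

open TopologicalSpace Pointwise

section GroupAction

variable {G X : Type*} [Group G] [MulAction G X]

theorem zpow_smul_set_subset_zpow_add_one_smul_set {g : G} {W : Set X} (hW : g⁻¹ • W ⊆ W)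
    (n : ℤ) : g ^ n • W ⊆ g ^ (n + 1) • W :=
  calc g ^ n • W = g ^ (n + 1) • g⁻¹ • W := by
        rw [smul_smul, zpow_add_one, mul_inv_cancel_right]
    _ ⊆ g ^ (n + 1) • W := Set.smul_set_mono hW

theorem iInter_nonpos_zpow_smul_set (g : G) (W : Set X) :
    ⋂ n : ℤ, ⋂ _ : n ≤ 0, g ^ n • W = ⋂ k : ℕ, g⁻¹ ^ k • W := by
  ext x
  simp only [Set.mem_iInter]
  constructor
  · intro h k
    simpa [zpow_neg, inv_pow] using h (-k) (by omega)
  · intro h n hn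
    obtain ⟨k, rfl⟩ := Int.exists_eq_neg_ofNat hn
    simpa [zpow_neg, inv_pow] using h k

end GroupAction

theorem Equiv.Perm.range_eq_inv_pow_smul_range {A B : Type*} (σ : Equiv.Perm B)
    {U : ℕ → A → B} (hU : ∀ n x, σ (U (n + 1) x) = U n x) (n : ℕ) :
    Set.range (U n) = σ⁻¹ ^ n • Set.range (U 0) := by
  induction n with
  | zero => simp
  | succ n ih =>
    have hstep : U (n + 1) = (σ⁻¹ • ·) ∘ U n := by
      funext x
      simp [Equiv.Perm.smul_def, ← hU n x]
    rw [hstep, Set.range_comp, Set.image_smul, ih, pow_succ', mul_smul]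

theorem Function.Semiconj.iInter_iterate_image_range {A B : Type*} {f : A → B}
    (hf : Function.Injective f) {S : A → A} {T : B → B} (h : Function.Semiconj f S T) :
    ⋂ k : ℕ, T^[k] '' Set.range f = f '' ⋂ k : ℕ, Set.range S^[k] := by
  rw [hf.injOn.image_iInter_eq]
  congr 1
  funext k
  rw [← Set.range_comp, ← (h.iterate_right k).comp_eq, Set.range_comp]

theorem Function.iInter_one_le_range_iterate {α : Type*} (f : α → α) :
    ⋂ k : ℕ, ⋂ _ : 1 ≤ k, Set.range f^[k] = ⋂ k : ℕ, Set.range f^[k] := by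
  ext x
  simp only [Set.mem_iInter]
  refine ⟨fun h k => ?_, fun h k _ => h k⟩
  rcases k with _ | k
  · exact ⟨x, rfl⟩
  · exact h _ (by omega)

theorem statement4_general
    {Γ : Type*} [CommGroup Γ]
    (α : Γ →* Γ)
    {K Kinf : Type*}
    [NormedAddCommGroup K] [InnerProductSpace ℂ K]
    [NormedAddCommGroup Kinf] [InnerProductSpace ℂ Kinf]
    (S : K →ₗᵢ[ℂ] K)
    (hpure : (⋂ k : ℕ, ⋂ _ : 1 ≤ k, Set.range ((⇑S)^[k])) = {0})
    (U : ℕ → (K →ₗᵢ[ℂ] Kinf))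
    (hU : ∀ (n : ℕ) (h : K), U (n + 1) (S h) = U n h)
    (hdense : Dense (⋃ n : ℕ, Set.range (U n)))
    (Sinf : Kinf ≃ₗᵢ[ℂ] Kinf)
    (hSinf : ∀ (n : ℕ) (h : K), Sinf (U (n + 1) h) = U n h)
    (ρ : Γ →* (K ≃ₗᵢ[ℂ] K))
    (π : Γ →* (Kinf ≃ₗᵢ[ℂ] Kinf))
    (hπ : ∀ (n : ℕ) (γ : Γ) (h : K), π γ (U n h) = U n (ρ ((⇑α)^[n] γ) h))
    (V : ℤ → Set Kinf)
    (hVnonneg : ∀ n : ℤ, 0 ≤ n → V n = Set.range (U n.toNat))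
    (hVneg : ∀ n : ℤ, n < 0 → V n = (⇑Sinf)^[n.natAbs] '' Set.range (U 0)) :
    (∀ n : ℤ, V n ⊆ V (n + 1)) ∧
    (∀ n : ℤ, V (n + 1) = Sinf.symm '' V n) ∧
    (Dense (⋃ n : ℕ, V n) ∧ (⋂ n : ℤ, ⋂ _ : n ≤ 0, V n) = {0}) ∧
    (∀ γ : Γ, π γ '' V 0 ⊆ V 0) := by
  set W := Set.range (U 0)
  let σ : Equiv.Perm Kinf := Sinf.toLinearEquiv.toEquiv
  have hσ_pow (k : ℕ) (A : Set Kinf) : σ ^ k • A = (⇑Sinf)^[k] '' A := by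
    rw [← Set.image_smul]
    simp [σ, Equiv.Perm.smul_def, Equiv.Perm.coe_pow]
  have hU0 : Function.Semiconj (U 0) S Sinf := fun h => by rw [← hU 0 h, hSinf]
  have hV (n : ℤ) : V n = σ⁻¹ ^ n • W := by
    rcases le_or_gt 0 n with hn | hn
    · lift n to ℕ using hn
      rw [hVnonneg n (Int.natCast_nonneg n), Int.toNat_natCast, zpow_natCast]
      exact σ.range_eq_inv_pow_smul_range (U := fun n => U n) hSinf n
    · obtain ⟨k, rfl⟩ := Int.exists_eq_neg_ofNat hn.le
      rw [hVneg _ hn, zpow_neg, zpow_natCast, inv_pow, inv_inv, hσ_pow, Int.natAbs_neg,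
        Int.natAbs_natCast]
  have hσW : σ • W ⊆ W := by
    rintro _ ⟨_, ⟨h, rfl⟩, rfl⟩
    exact ⟨S h, hU0 h⟩
  refine ⟨fun n => ?_, fun n => ?_, ⟨?_, ?_⟩, fun γ => ?_⟩
  · rw [hV, hV]
    exact zpow_smul_set_subset_zpow_add_one_smul_set (by rwa [inv_inv]) n
  · rw [hV, hV, add_comm, zpow_one_add, mul_smul, ← Set.image_smul]
    rfl
  · simpa only [hVnonneg _ (Int.natCast_nonneg _), Int.toNat_natCast] using hdense
  · simp_rw [hV, iInter_nonpos_zpow_smul_set, inv_inv, hσ_pow]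
    rw [hU0.iInter_iterate_image_range (U 0).injective, ← Function.iInter_one_le_range_iterate,
      hpure, Set.image_singleton, map_zero]
  · rw [hVnonneg 0 le_rfl]
    rintro _ ⟨_, ⟨h, rfl⟩, rfl⟩
    exact ⟨_, (hπ 0 γ h).symm⟩

theorem statement4
    {Γ : Type*} [CommGroup Γ] [Countable Γ]
    (α : Γ →* Γ) (hα : Function.Injective α)
    {K Kinf : Type*}
    [NormedAddCommGroup K] [InnerProductSpace ℂ K] [CompleteSpace K] [SeparableSpace K]
    [NormedAddCommGroup Kinf] [InnerProductSpace ℂ Kinf] [CompleteSpace Kinf]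
    [SeparableSpace Kinf]
    (S : K →ₗᵢ[ℂ] K)
    (hpure : (⋂ k : ℕ, ⋂ _ : 1 ≤ k, Set.range ((⇑S)^[k])) = {0})
    (U : ℕ → (K →ₗᵢ[ℂ] Kinf))
    (hU : ∀ (n : ℕ) (h : K), U (n + 1) (S h) = U n h)
    (hdense : Dense (⋃ n : ℕ, Set.range (U n)))
    (Sinf : Kinf ≃ₗᵢ[ℂ] Kinf)
    (hSinf : ∀ (n : ℕ) (h : K), Sinf (U (n + 1) h) = U n h)
    (ρ : Γ →* (K ≃ₗᵢ[ℂ] K))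
    (hρ : ∀ (γ : Γ) (h : K), S (ρ γ h) = ρ (α γ) (S h))
    (π : Γ →* (Kinf ≃ₗᵢ[ℂ] Kinf))
    (hπ : ∀ (n : ℕ) (γ : Γ) (h : K), π γ (U n h) = U n (ρ ((⇑α)^[n] γ) h))
    (V : ℤ → Set Kinf)
    (hVnonneg : ∀ n : ℤ, 0 ≤ n → V n = Set.range (U n.toNat))
    (hVneg : ∀ n : ℤ, n < 0 → V n = (⇑Sinf)^[n.natAbs] '' Set.range (U 0)) :
    (∀ n : ℤ, V n ⊆ V (n + 1)) ∧
    (∀ n : ℤ, V (n + 1) = Sinf.symm '' V n) ∧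
    (Dense (⋃ n : ℕ, V n) ∧ (⋂ n : ℤ, ⋂ _ : n ≤ 0, V n) = {0}) ∧
    (∀ γ : Γ, π γ '' V 0 ⊆ V 0) :=
  statement4_general α S hpure U hU hdense Sinf hSinf ρ π hπ V hVnonneg hVneg
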